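/- arXiv:1905.09191 — 8 statements merged into one kernel-verified Lean document; each statement's English description precedes it below -/
import Mathlib

section
/- Policy-over-options gradient theorem for the soft robust loss (Theorem 1): In the finite rectangular option MDP, let the policy over options be a parameterized family πΩ : ℝ → S → O → ℝ (for each θ ∈ ℝ, πΩ θ s ω ≥ 0 and ∑_ω πΩ θ s ω = 1), while πo, β, K, c, w do not depend on θ, and for each θ let (QΩ θ, Qo θ, Qβ θ, VΩ θ) satisfy the rectangular Bellman system with policy over options πΩ θ; let Pγ θ, Pγ^k θ and the averaged value functions Q̄Ω θ be defined accordingly. Define the discounted state weighting κ^k θ ((s₀,ω₀), s'') := ∑_{(s',ω')} Pγ^k θ ((s₀,ω₀),(s',ω')) * ∑_a πo ω' s' a * γ * K̄ s' a s'' * β ω' s'' and d̄ θ ((s₀,ω₀), s) := ∑_{k=0}^∞ κ^k θ ((s₀,ω₀), s) (this series converges since ∑_s κ^k θ ((s₀,ω₀), s) ≤ γ^{k+1} and 0 ≤ γ < 1). Fix θ₀ ∈ ℝ and assume that for every s, ω the map θ ↦ πΩ θ s ω is differentiable at θ₀ and for every s, ω, p the map θ ↦ QΩ θ s ω p is differentiable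 at θ₀. Then for every initial state–option pair (s₀, ω₀): ∑_p w p * deriv (θ ↦ QΩ θ s₀ ω₀ p) θ₀ = ∑_s d̄ θ₀ ((s₀,ω₀), s) * ∑_ω (deriv (θ ↦ πΩ θ s ω) θ₀) * Q̄Ω θ₀ s ω. -/
/-!
Because the model parameter is redrawn at every state, averaging the Bellman system over it
closes up into the linear equation `Q̄ = r + Pγ Q̄` on state–option pairs, and `Pγ` depends on
`θ` only through `πΩ`, affinely, with coefficient the termination kernel `B`. Differentiating
at `θ₀` gives `u = B (∂πΩ · Q̄) + Pγ u` for the averaged derivative `u`. As `Pγ` is nonnegative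
with row sums `γ < 1`, it contracts the sup norm, so the Neumann series
`u = ∑ₖ Pγᵏ B (∂πΩ · Q̄)` converges; regrouping by the state of termination is the claim.
-/

open scoped Classical

open Finset

variable {S O A P : Type*} [Fintype S] [Fintype O] [Fintype A] [Fintype P]

/-- The average transition kernel `K̄ s a s' = ∑ p, w p * K p s a s'`. -/
noncomputable def Kbar (w : P → ℝ) (K : P → S → A → S → ℝ) (s : S) (a : A) (s' : S) : ℝ :=
  ∑ p, w p * K p s a s'

/-- One-step discounted state–option kernel `Pγ`. -/
noncomputable def Pgam (w : P → ℝ) (K : P → S → A → S → ℝ) (γ : ℝ)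
    (πo : O → S → A → ℝ) (β : O → S → ℝ) (πΩ : S → O → ℝ)
    (x y : S × O) : ℝ :=
  ∑ a, πo x.2 x.1 a * γ * Kbar w K x.1 a y.1 *
    ((1 - β x.2 y.1) * (if y.2 = x.2 then 1 else 0) + β x.2 y.1 * πΩ y.1 y.2)

/-- k-step iterates `Pγ^k` of the one-step discounted state–option kernel. -/
noncomputable def PgamIter (w : P → ℝ) (K : P → S → A → S → ℝ) (γ : ℝ)
    (πo : O → S → A → ℝ) (β : O → S → ℝ) (πΩ : S → O → ℝ) :
    ℕ → S × O → S × O → ℝ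
  | 0, x, y => if y = x then 1 else 0
  | (k + 1), x, y => ∑ z, Pgam w K γ πo β πΩ x z * PgamIter w K γ πo β πΩ k z y

open Filter Topology
open scoped Matrix

namespace Matrix

variable {X Y : Type*} [Fintype X] [Fintype Y] {M : Matrix X X ℝ} {γ : ℝ}

theorem norm_mulVec_le_of_rowSum_le (hγ0 : 0 ≤ γ) (hM0 : ∀ i j, 0 ≤ M i j)
    (hM : ∀ i, ∑ j, M i j ≤ γ) (v : X → ℝ) : ‖M *ᵥ v‖ ≤ γ * ‖v‖ := by
  refine (pi_norm_le_iff_of_nonneg (by positivity)).2 fun i => ?_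
  calc ‖(M *ᵥ v) i‖ ≤ ∑ j, ‖M i j * v j‖ := norm_sum_le _ _
    _ ≤ ∑ j, M i j * ‖v‖ := by
        gcongr with j
        rw [norm_mul, Real.norm_of_nonneg (hM0 i j)]
        exact mul_le_mul_of_nonneg_left (norm_le_pi_norm v j) (hM0 i j)
    _ = (∑ j, M i j) * ‖v‖ := (sum_mul ..).symm
    _ ≤ γ * ‖v‖ := by gcongr; exact hM i

section Contraction

variable [DecidableEq X] (hγ0 : 0 ≤ γ) (hM : ∀ v : X → ℝ, ‖M *ᵥ v‖ ≤ γ * ‖v‖)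
include hγ0 hM

theorem norm_pow_mulVec_le (v : X → ℝ) (k : ℕ) : ‖M ^ k *ᵥ v‖ ≤ γ ^ k * ‖v‖ := by
  induction k with
  | zero => simp
  | succ k ih =>
    calc ‖M ^ (k + 1) *ᵥ v‖ = ‖M *ᵥ (M ^ k *ᵥ v)‖ := by rw [pow_succ', mulVec_mulVec]
      _ ≤ γ * (γ ^ k * ‖v‖) := (hM _).trans (by gcongr)
      _ = γ ^ (k + 1) * ‖v‖ := by ring

variable (hγ1 : γ < 1)
include hγ1

theorem summable_norm_pow_mulVec (v : X → ℝ) : Summable fun k => ‖M ^ k *ᵥ v‖ :=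
  .of_nonneg_of_le (fun _ => norm_nonneg _) (norm_pow_mulVec_le hγ0 hM v)
    ((summable_geometric_of_lt_one hγ0 hγ1).mul_right _)

theorem hasSum_pow_mulVec_of_eq_add_mulVec {u h : X → ℝ} (hu : u = h + M *ᵥ u) :
    HasSum (fun k => M ^ k *ᵥ h) u := by
  have partial_sum : ∀ n, ∑ k ∈ range n, M ^ k *ᵥ h = u - M ^ n *ᵥ u := by
    intro n
    induction n with
    | zero => simp
    | succ n ih =>
      rw [sum_range_succ, ih]
      nth_rw 2 [hu]
      rw [mulVec_add, mulVec_mulVec, ← pow_succ]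
      abel
  have tail : Tendsto (fun n => M ^ n *ᵥ u) atTop (𝓝 0) := by
    refine squeeze_zero_norm (norm_pow_mulVec_le hγ0 hM u) ?_
    simpa using (tendsto_pow_atTop_nhds_zero_of_lt_one hγ0 hγ1).mul_const ‖u‖
  rw [hasSum_iff_tendsto_nat_of_summable_norm (summable_norm_pow_mulVec hγ0 hM hγ1 h)]
  simpa [partial_sum] using tendsto_const_nhds.sub tail

theorem tsum_pow_mulVec_mulVec_apply (B : Matrix X Y ℝ) (G : Y → ℝ) (x : X) :
    ∑' k, (M ^ k *ᵥ (B *ᵥ G)) x = ∑ y, (∑' k, (M ^ k * B : Matrix X Y ℝ) x y) * G y := by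
  have column_summable : ∀ y, Summable fun k => (M ^ k * B : Matrix X Y ℝ) x y := fun y =>
    Pi.summable.1 ((summable_norm_pow_mulVec hγ0 hM hγ1 (Bᵀ y)).of_norm) x
  simp_rw [mulVec_mulVec, ← tsum_mul_right]
  exact Summable.tsum_finsetSum fun y _ => (column_summable y).mul_right _

end Contraction

end Matrix

theorem sum_switch_mul {O : Type*} [Fintype O] (b : ℝ) (q g : O → ℝ) (ω : O) :
    ∑ ω', ((1 - b) * (if ω' = ω then 1 else 0) + b * q ω') * g ω' =
      (1 - b) * g ω + b * ∑ ω', q ω' * g ω' := by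
  simp [add_mul, sum_add_distrib, mul_sum, mul_assoc]

section OptionMDP

variable {w : P → ℝ} {K : P → S → A → S → ℝ} {γ : ℝ} {πo : O → S → A → ℝ} {β : O → S → ℝ}
  {π : S → O → ℝ}

noncomputable def Qbar (w : P → ℝ) (Q : S → O → P → ℝ) (x : S × O) : ℝ :=
  ∑ p, w p * Q x.1 x.2 p

noncomputable def terminationKernel (w : P → ℝ) (K : P → S → A → S → ℝ) (γ : ℝ)
    (πo : O → S → A → ℝ) (β : O → S → ℝ) : Matrix (S × O) S ℝ :=
  Matrix.of fun x s => ∑ a, πo x.2 x.1 a * γ * Kbar w K x.1 a s * β x.2 s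

theorem sum_Pgam_mul (f : S × O → ℝ) (x : S × O) :
    ∑ y, Pgam w K γ πo β π x y * f y =
      ∑ a, πo x.2 x.1 a * γ * ∑ s', Kbar w K x.1 a s' *
        ((1 - β x.2 s') * f (s', x.2) + β x.2 s' * ∑ ω', π s' ω' * f (s', ω')) := by
  calc ∑ y, Pgam w K γ πo β π x y * f y
      = ∑ s', ∑ a, πo x.2 x.1 a * γ * Kbar w K x.1 a s' * ∑ ω',
          ((1 - β x.2 s') * (if ω' = x.2 then 1 else 0) + β x.2 s' * π s' ω') * f (s', ω') := by
        rw [Fintype.sum_prod_type]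
        refine sum_congr rfl fun s' _ => ?_
        simp only [Pgam, sum_mul, mul_sum]
        rw [sum_comm]
        simp only [mul_assoc]
    _ = _ := by
        rw [sum_comm]
        simp only [sum_switch_mul, mul_sum, mul_assoc]

theorem sum_Pgam (hK1 : ∀ p s a, ∑ s', K p s a s' = 1) (hw1 : ∑ p, w p = 1)
    (hπo1 : ∀ ω s, ∑ a, πo ω s a = 1) (hπ1 : ∀ s, ∑ ω, π s ω = 1) (x : S × O) :
    ∑ y, Pgam w K γ πo β π x y = γ := by
  have sum_Kbar : ∀ (s : S) (a : A), ∑ s', Kbar w K s a s' = 1 := fun s a => by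
    simp only [Kbar]
    rw [sum_comm]
    simp [← mul_sum, hK1, hw1]
  simpa only [mul_one, hπ1, sub_add_cancel, sum_Kbar, ← sum_mul, hπo1, one_mul] using
    sum_Pgam_mul (w := w) (K := K) (γ := γ) (πo := πo) (β := β) (π := π) (fun _ => 1) x

omit [Fintype S] [Fintype O] in
theorem Pgam_nonneg (hγ0 : 0 ≤ γ) (hK0 : ∀ p s a s', 0 ≤ K p s a s') (hw0 : ∀ p, 0 ≤ w p)
    (hπo0 : ∀ ω s a, 0 ≤ πo ω s a) (hβ0 : ∀ ω s, 0 ≤ β ω s) (hβ1 : ∀ ω s, β ω s ≤ 1)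
    (hπ0 : ∀ s ω, 0 ≤ π s ω) (x y : S × O) : 0 ≤ Pgam w K γ πo β π x y := by
  have Kbar_nonneg : ∀ a, 0 ≤ Kbar w K x.1 a y.1 := fun a =>
    sum_nonneg fun p _ => mul_nonneg (hw0 p) (hK0 p _ a _)
  have switch_nonneg : 0 ≤ (1 - β x.2 y.1) * (if y.2 = x.2 then 1 else 0) +
      β x.2 y.1 * π y.1 y.2 :=
    add_nonneg (mul_nonneg (sub_nonneg.2 (hβ1 _ _)) (by split_ifs <;> norm_num))
      (mul_nonneg (hβ0 _ _) (hπ0 _ _))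
  exact sum_nonneg fun a _ =>
    mul_nonneg (mul_nonneg (mul_nonneg (hπo0 _ _ a) hγ0) (Kbar_nonneg a)) switch_nonneg

omit [Fintype S] [Fintype O] in
theorem Pgam_eq_Pgam_zero_add (x y : S × O) :
    Pgam w K γ πo β π x y =
      Pgam w K γ πo β 0 x y + terminationKernel w K γ πo β x y.1 * π y.1 y.2 := by
  simp only [Pgam, terminationKernel, Matrix.of_apply, Pi.zero_apply, mul_zero, add_zero,
    sum_mul, ← sum_add_distrib]
  exact sum_congr rfl fun a _ => by ring

theorem PgamIter_eq_pow (k : ℕ) :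
    PgamIter w K γ πo β π k = Matrix.of (Pgam w K γ πo β π) ^ k := by
  induction k with
  | zero => ext x y; simp [PgamIter, Matrix.one_apply, eq_comm]
  | succ k ih => ext x y; simp [PgamIter, pow_succ', Matrix.mul_apply, ih]

theorem Qbar_eq_bellman (c : S → A → ℝ) (hw1 : ∑ p, w p = 1)
    {QΩ Qβ : S → O → P → ℝ} {Qo : S → O → A → P → ℝ} {VΩ : S → P → ℝ}
    (hQΩ : ∀ s ω p, QΩ s ω p = ∑ a, πo ω s a * Qo s ω a p)
    (hQo : ∀ s ω a p, Qo s ω a p = c s a + γ * ∑ s', K p s a s' * (∑ p', w p' * Qβ s' ω p'))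
    (hQβ : ∀ s ω p, Qβ s ω p = (1 - β ω s) * QΩ s ω p + β ω s * VΩ s p)
    (hVΩ : ∀ s p, VΩ s p = ∑ ω, π s ω * QΩ s ω p) (x : S × O) :
    Qbar w QΩ x = ∑ a, πo x.2 x.1 a * c x.1 a + ∑ y, Pgam w K γ πo β π x y * Qbar w QΩ y := by
  obtain ⟨s, ω⟩ := x
  have avg_Qβ : ∀ s', ∑ p, w p * Qβ s' ω p =
      (1 - β ω s') * Qbar w QΩ (s', ω) + β ω s' * ∑ ω', π s' ω' * Qbar w QΩ (s', ω') := by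
    intro s'
    simp only [Qbar, hQβ, hVΩ, mul_add, sum_add_distrib, mul_sum]
    rw [sum_comm]
    congr 1 <;> refine sum_congr rfl fun _ _ => ?_
    · ring
    · exact sum_congr rfl fun _ _ => by ring
  have avg_Qo : ∀ a, ∑ p, w p * Qo s ω a p =
      c s a + γ * ∑ s', Kbar w K s a s' * ∑ p, w p * Qβ s' ω p := by
    intro a
    simp only [hQo]
    suffices ∀ E : S → ℝ, ∑ p, w p * (c s a + γ * ∑ s', K p s a s' * E s') =
        c s a + γ * ∑ s', Kbar w K s a s' * E s' from this _
    intro E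
    simp only [mul_add, sum_add_distrib, ← sum_mul, hw1, one_mul]
    congr 1
    simp only [Kbar, mul_sum, sum_mul]
    rw [sum_comm]
    exact sum_congr rfl fun _ _ => sum_congr rfl fun _ _ => by ring
  calc Qbar w QΩ (s, ω) = ∑ a, πo ω s a * ∑ p, w p * Qo s ω a p := by
        simp only [Qbar, hQΩ, mul_sum]
        rw [sum_comm]
        exact sum_congr rfl fun _ _ => sum_congr rfl fun _ _ => by ring
    _ = _ := by
        simp only [avg_Qo, avg_Qβ, sum_Pgam_mul, mul_add, sum_add_distrib, mul_assoc]

end OptionMDP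

theorem eq_of_hasDerivAt_affine_fixedPoint {X : Type*} [Fintype X] {r : X → ℝ}
    {C D : X → X → ℝ} {g f : ℝ → X → ℝ} {θ₀ : ℝ} {g' f' : X → ℝ}
    (hfix : ∀ θ x, f θ x = r x + ∑ y, (C x y + D x y * g θ y) * f θ y)
    (hg : ∀ y, HasDerivAt (fun θ => g θ y) (g' y) θ₀)
    (hf : ∀ y, HasDerivAt (fun θ => f θ y) (f' y) θ₀) (x : X) :
    f' x = ∑ y, D x y * g' y * f θ₀ y + ∑ y, (C x y + D x y * g θ₀ y) * f' y := by
  have hfx : HasDerivAt (fun θ => f θ x) (0 + ∑ y, ((0 + D x y * g' y) * f θ₀ y +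
      (C x y + D x y * g θ₀ y) * f' y)) θ₀ := by
    rw [funext fun θ => hfix θ x]
    exact (hasDerivAt_const θ₀ (r x)).add (HasDerivAt.fun_sum fun y _ =>
      ((hasDerivAt_const θ₀ (C x y)).add ((hg y).const_mul (D x y))).mul (hf y))
  rw [(hf x).unique hfx, zero_add, ← sum_add_distrib]
  exact sum_congr rfl fun y _ => by ring

theorem policy_over_options_gradient_soft_robust_general
    (γ : ℝ) (hγ0 : 0 ≤ γ) (hγ1 : γ < 1)
    (c : S → A → ℝ)
    (K : P → S → A → S → ℝ)
    (hK0 : ∀ p s a s', 0 ≤ K p s a s') (hK1 : ∀ p s a, ∑ s', K p s a s' = 1)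
    (w : P → ℝ) (hw0 : ∀ p, 0 ≤ w p) (hw1 : ∑ p, w p = 1)
    (πΩ : ℝ → S → O → ℝ)
    (hπΩ0 : ∀ θ s ω, 0 ≤ πΩ θ s ω) (hπΩ1 : ∀ θ s, ∑ ω, πΩ θ s ω = 1)
    (πo : O → S → A → ℝ)
    (hπo0 : ∀ ω s a, 0 ≤ πo ω s a) (hπo1 : ∀ ω s, ∑ a, πo ω s a = 1)
    (β : O → S → ℝ) (hβ0 : ∀ ω s, 0 ≤ β ω s) (hβ1 : ∀ ω s, β ω s ≤ 1)
    (QΩ : ℝ → S → O → P → ℝ) (Qo : ℝ → S → O → A → P → ℝ)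
    (Qβ : ℝ → S → O → P → ℝ) (VΩ : ℝ → S → P → ℝ)
    (hQΩ : ∀ θ s ω p, QΩ θ s ω p = ∑ a, πo ω s a * Qo θ s ω a p)
    (hQo : ∀ θ s ω a p,
      Qo θ s ω a p = c s a + γ * ∑ s', K p s a s' * (∑ p', w p' * Qβ θ s' ω p'))
    (hQβ : ∀ θ s ω p, Qβ θ s ω p = (1 - β ω s) * QΩ θ s ω p + β ω s * VΩ θ s p)
    (hVΩ : ∀ θ s p, VΩ θ s p = ∑ ω, πΩ θ s ω * QΩ θ s ω p)
    (θ₀ : ℝ)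
    (hdπ : ∀ s ω, DifferentiableAt ℝ (fun θ => πΩ θ s ω) θ₀)
    (hdQ : ∀ s ω p, DifferentiableAt ℝ (fun θ => QΩ θ s ω p) θ₀)
    (s₀ : S) (ω₀ : O) :
    ∑ p, w p * deriv (fun θ => QΩ θ s₀ ω₀ p) θ₀ =
      ∑ s, (∑' k : ℕ, ∑ q : S × O,
            PgamIter w K γ πo β (πΩ θ₀) k (s₀, ω₀) q *
              ∑ a, πo q.2 q.1 a * γ * Kbar w K q.1 a s * β q.2 s) *
        (∑ ω, deriv (fun θ => πΩ θ s ω) θ₀ * (∑ p, w p * QΩ θ₀ s ω p)) := by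
  set M := Matrix.of (Pgam w K γ πo β (πΩ θ₀))
  set B := terminationKernel w K γ πo β
  set G : S → ℝ := fun s => ∑ ω, deriv (fun θ => πΩ θ s ω) θ₀ * Qbar w (QΩ θ₀) (s, ω)
  set u : S × O → ℝ := fun x => ∑ p, w p * deriv (fun θ => QΩ θ x.1 x.2 p) θ₀
  have bellman : ∀ θ x, Qbar w (QΩ θ) x = ∑ a, πo x.2 x.1 a * c x.1 a +
      ∑ y, (Pgam w K γ πo β 0 x y + B x y.1 * πΩ θ y.1 y.2) * Qbar w (QΩ θ) y := fun θ x => by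
    rw [Qbar_eq_bellman c hw1 (hQΩ θ) (hQo θ) (hQβ θ) (hVΩ θ) x]
    exact congrArg _ (sum_congr rfl fun y _ => by rw [Pgam_eq_Pgam_zero_add])
  have fixedPoint : u = B *ᵥ G + M *ᵥ u := by
    funext x
    refine (eq_of_hasDerivAt_affine_fixedPoint (f' := u) bellman
      (fun y => (hdπ y.1 y.2).hasDerivAt)
      (fun y => HasDerivAt.fun_sum fun p _ => (hdQ y.1 y.2 p).hasDerivAt.const_mul (w p))
      x).trans ?_
    congr 1
    · simp only [Matrix.mulVec, dotProduct, G, mul_sum, Fintype.sum_prod_type, mul_assoc]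
    · exact sum_congr rfl fun y _ => congrArg (· * u y) (Pgam_eq_Pgam_zero_add x y).symm
  have contraction : ∀ v, ‖M *ᵥ v‖ ≤ γ * ‖v‖ :=
    Matrix.norm_mulVec_le_of_rowSum_le hγ0
      (Pgam_nonneg hγ0 hK0 hw0 hπo0 hβ0 hβ1 (hπΩ0 θ₀))
      fun x => (sum_Pgam hK1 hw1 hπo1 (hπΩ1 θ₀) x).le
  have neumann := (Pi.hasSum.1
    (Matrix.hasSum_pow_mulVec_of_eq_add_mulVec hγ0 contraction hγ1 fixedPoint) (s₀, ω₀)).tsum_eq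
  rw [Matrix.tsum_pow_mulVec_mulVec_apply hγ0 contraction hγ1] at neumann
  simp only [PgamIter_eq_pow]
  exact neumann.symm

/-- Policy-over-options gradient theorem for the soft robust loss (Theorem 1). -/
theorem policy_over_options_gradient_soft_robust
    [Nonempty S] [Nonempty O] [Nonempty A] [Nonempty P]
    (γ : ℝ) (hγ0 : 0 ≤ γ) (hγ1 : γ < 1)
    (c : S → A → ℝ)
    (K : P → S → A → S → ℝ)
    (hK0 : ∀ p s a s', 0 ≤ K p s a s') (hK1 : ∀ p s a, ∑ s', K p s a s' = 1)
    (w : P → ℝ) (hw0 : ∀ p, 0 ≤ w p) (hw1 : ∑ p, w p = 1)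
    (πΩ : ℝ → S → O → ℝ)
    (hπΩ0 : ∀ θ s ω, 0 ≤ πΩ θ s ω) (hπΩ1 : ∀ θ s, ∑ ω, πΩ θ s ω = 1)
    (πo : O → S → A → ℝ)
    (hπo0 : ∀ ω s a, 0 ≤ πo ω s a) (hπo1 : ∀ ω s, ∑ a, πo ω s a = 1)
    (β : O → S → ℝ) (hβ0 : ∀ ω s, 0 ≤ β ω s) (hβ1 : ∀ ω s, β ω s ≤ 1)
    (QΩ : ℝ → S → O → P → ℝ) (Qo : ℝ → S → O → A → P → ℝ)
    (Qβ : ℝ → S → O → P → ℝ) (VΩ : ℝ → S → P → ℝ)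
    (hQΩ : ∀ θ s ω p, QΩ θ s ω p = ∑ a, πo ω s a * Qo θ s ω a p)
    (hQo : ∀ θ s ω a p,
      Qo θ s ω a p = c s a + γ * ∑ s', K p s a s' * (∑ p', w p' * Qβ θ s' ω p'))
    (hQβ : ∀ θ s ω p, Qβ θ s ω p = (1 - β ω s) * QΩ θ s ω p + β ω s * VΩ θ s p)
    (hVΩ : ∀ θ s p, VΩ θ s p = ∑ ω, πΩ θ s ω * QΩ θ s ω p)
    (θ₀ : ℝ)
    (hdπ : ∀ s ω, DifferentiableAt ℝ (fun θ => πΩ θ s ω) θ₀)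
    (hdQ : ∀ s ω p, DifferentiableAt ℝ (fun θ => QΩ θ s ω p) θ₀)
    (s₀ : S) (ω₀ : O) :
    ∑ p, w p * deriv (fun θ => QΩ θ s₀ ω₀ p) θ₀ =
      ∑ s, (∑' k : ℕ, ∑ q : S × O,
            PgamIter w K γ πo β (πΩ θ₀) k (s₀, ω₀) q *
              ∑ a, πo q.2 q.1 a * γ * Kbar w K q.1 a s * β q.2 s) *
        (∑ ω, deriv (fun θ => πΩ θ s ω) θ₀ * (∑ p, w p * QΩ θ₀ s ω p)) :=
  policy_over_options_gradient_soft_robust_general γ hγ0 hγ1 c K hK0 hK1 w hw0 hw1 πΩ hπΩ0 hπΩ1 πo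
    hπo0 hπo1 β hβ0 hβ1 QΩ Qo Qβ VΩ hQΩ hQo hQβ hVΩ θ₀ hdπ hdQ s₀ ω₀
end

section
/- Finite-horizon backward induction for Corollary 2 (soft robust loss equals loss on the average MDP): In the finite rectangular option MDP, define finite-horizon parameterized value functions Q : ℕ → S → O → P → ℝ by Q 0 s ω p = ∑_a πo ω s a * c s a and Q (n+1) s ω p = ∑_a πo ω s a * (c s a + γ * ∑_{s'} K p s a s' * ((1 − β ω s') * (∑_{p'} w p' * Q n s' ω p') + β ω s' * ∑_{ω'} πΩ s' ω' * (∑_{p'} w p' * Q n s' ω' p'))) (the inner averages over p' encode rectangularity), and average-MDP value functions Q̄ : ℕ → S → O → ℝ by Q̄ 0 s ω = ∑_a πo ω s a * c s a and Q̄ (n+1) s ω = ∑_a πo ω s a * (c s a + γ * ∑_{s'} K̄ s a s' * ((1 − β ω s') * Q̄ n s' ω + β ω s' * ∑_{ω'} πΩ s' ω' * Q̄ n s' ω')). Then for every horizon n ∈ ℕ and all s ∈ S, ω ∈ O: ∑_p w p * Q n s ω p = Q̄ n s ω, and consequently ∑_p w p * (∑_ω πΩ s ω * Q n s ω p) = ∑_ω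 πΩ s ω * Q̄ n s ω. -/
open Finset

variable {S O A P : Type*} [Fintype S] [Fintype O] [Fintype A] [Fintype P]

/-- Finite-horizon backward induction for Corollary 2: the soft robust
finite-horizon value functions coincide with the value functions of the
average parameterized MDP. -/
theorem finite_horizon_soft_robust_eq_average
    [Nonempty S] [Nonempty O] [Nonempty A] [Nonempty P]
    (γ : ℝ) (hγ0 : 0 ≤ γ) (hγ1 : γ < 1)
    (c : S → A → ℝ)
    (K : P → S → A → S → ℝ)
    (hK0 : ∀ p s a s', 0 ≤ K p s a s') (hK1 : ∀ p s a, ∑ s', K p s a s' = 1)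
    (w : P → ℝ) (hw0 : ∀ p, 0 ≤ w p) (hw1 : ∑ p, w p = 1)
    (πΩ : S → O → ℝ)
    (hπΩ0 : ∀ s ω, 0 ≤ πΩ s ω) (hπΩ1 : ∀ s, ∑ ω, πΩ s ω = 1)
    (πo : O → S → A → ℝ)
    (hπo0 : ∀ ω s a, 0 ≤ πo ω s a) (hπo1 : ∀ ω s, ∑ a, πo ω s a = 1)
    (β : O → S → ℝ) (hβ0 : ∀ ω s, 0 ≤ β ω s) (hβ1 : ∀ ω s, β ω s ≤ 1)
    (Q : ℕ → S → O → P → ℝ)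
    (hQ0 : ∀ s ω p, Q 0 s ω p = ∑ a, πo ω s a * c s a)
    (hQs : ∀ n s ω p, Q (n + 1) s ω p =
      ∑ a, πo ω s a * (c s a + γ * ∑ s', K p s a s' *
        ((1 - β ω s') * (∑ p', w p' * Q n s' ω p') +
          β ω s' * ∑ ω', πΩ s' ω' * (∑ p', w p' * Q n s' ω' p'))))
    (Qb : ℕ → S → O → ℝ)
    (hQb0 : ∀ s ω, Qb 0 s ω = ∑ a, πo ω s a * c s a)
    (hQbs : ∀ n s ω, Qb (n + 1) s ω =
      ∑ a, πo ω s a * (c s a + γ * ∑ s', Kbar w K s a s' *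
        ((1 - β ω s') * Qb n s' ω + β ω s' * ∑ ω', πΩ s' ω' * Qb n s' ω'))) :
    ∀ (n : ℕ) (s : S) (ω : O),
      (∑ p, w p * Q n s ω p = Qb n s ω) ∧
      (∑ p, w p * (∑ ω', πΩ s ω' * Q n s ω' p) = ∑ ω', πΩ s ω' * Qb n s ω') := by
  have key : ∀ n, ∀ (s : S) (ω : O), ∑ p, w p * Q n s ω p = Qb n s ω := by
    intro n
    induction n with
    | zero =>
      intro s ω
      simp only [hQ0, hQb0, ← Finset.sum_mul, hw1, one_mul]
    | succ n ih =>
      intro s ω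
      have step : ∀ p, Q (n + 1) s ω p =
          ∑ a, πo ω s a * (c s a + γ * ∑ s', K p s a s' *
            ((1 - β ω s') * Qb n s' ω + β ω s' * ∑ ω', πΩ s' ω' * Qb n s' ω')) := by
        intro p
        rw [hQs]
        simp only [ih]
      rw [hQbs]
      set x : S → ℝ := fun s' =>
        (1 - β ω s') * Qb n s' ω + β ω s' * ∑ ω', πΩ s' ω' * Qb n s' ω' with hx
      have h2 : ∀ a, ∑ s', Kbar w K s a s' * x s'
          = ∑ p, w p * ∑ s', K p s a s' * x s' := by
        intro a
        calc ∑ s', Kbar w K s a s' * x s'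
            = ∑ s', ∑ p, (w p * K p s a s') * x s' := by
              refine Finset.sum_congr rfl fun s' _ => ?_
              rw [Kbar, Finset.sum_mul]
          _ = ∑ p, ∑ s', (w p * K p s a s') * x s' := Finset.sum_comm
          _ = ∑ p, w p * ∑ s', K p s a s' * x s' := by
              refine Finset.sum_congr rfl fun p _ => ?_
              rw [Finset.mul_sum]
              exact Finset.sum_congr rfl fun s' _ => by ring
      have hA : ∀ a, πo ω s a * (c s a + γ * ∑ s', Kbar w K s a s' * x s')
          = ∑ p, w p * (πo ω s a * (c s a + γ * ∑ s', K p s a s' * x s')) := by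
        intro a
        rw [h2]
        have h3 : πo ω s a * (c s a + γ * ∑ p, w p * ∑ s', K p s a s' * x s')
            = πo ω s a * c s a * (∑ p, w p) +
              (πo ω s a * γ) * ∑ p, w p * ∑ s', K p s a s' * x s' := by
          rw [hw1]; ring
        rw [h3, Finset.mul_sum, Finset.mul_sum, ← Finset.sum_add_distrib]
        exact Finset.sum_congr rfl fun p _ => by ring
      calc ∑ p, w p * Q (n + 1) s ω p
          = ∑ p, ∑ a, w p * (πo ω s a * (c s a + γ * ∑ s', K p s a s' * x s')) := by
            refine Finset.sum_congr rfl fun p _ => ?_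
            rw [step p, Finset.mul_sum]
        _ = ∑ a, ∑ p, w p * (πo ω s a * (c s a + γ * ∑ s', K p s a s' * x s')) :=
            Finset.sum_comm
        _ = ∑ a, πo ω s a * (c s a + γ * ∑ s', Kbar w K s a s' * x s') :=
            Finset.sum_congr rfl fun a _ => (hA a).symm
  intro n s ω
  refine ⟨key n s ω, ?_⟩
  calc ∑ p, w p * ∑ ω', πΩ s ω' * Q n s ω' p
      = ∑ p, ∑ ω', w p * (πΩ s ω' * Q n s ω' p) := by
        exact Finset.sum_congr rfl fun p _ => Finset.mul_sum _ _ _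
    _ = ∑ ω', ∑ p, w p * (πΩ s ω' * Q n s ω' p) := Finset.sum_comm
    _ = ∑ ω', πΩ s ω' * ∑ p, w p * Q n s ω' p := by
        refine Finset.sum_congr rfl fun ω' _ => ?_
        rw [Finset.mul_sum]
        exact Finset.sum_congr rfl fun p _ => by ring
    _ = ∑ ω', πΩ s ω' * Qb n s ω' :=
        Finset.sum_congr rfl fun ω' _ => by rw [key n s ω']
end

section
/- Averaged Bellman equations (infinite-horizon form of Corollary 2): In the finite rectangular option MDP, suppose (QΩ, Qo, Qβ, VΩ) satisfies the rectangular Bellman system. Then the averaged value functions satisfy the Bellman equations of the average option MDP with kernel K̄, i.e., for all s, ω, a: Q̄Ω s ω = ∑_a πo ω s a * Q̄o s ω a; Q̄o s ω a = c s a + γ * ∑_{s'} K̄ s a s' * Q̄β s' ω; Q̄β s ω = (1 − β ω s) * Q̄Ω s ω + β ω s * V̄Ω s; and V̄Ω s = ∑_ω πΩ s ω * Q̄Ω s ω. In particular, the soft robust value ∑_p w p * VΩ s p coincides with the value function V̄Ω of the average parameterized MDP. -/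
open Finset

variable {S O A P : Type*} [Fintype S] [Fintype O] [Fintype A] [Fintype P]

/-- Averaged Bellman equations (infinite-horizon form of Corollary 2): the
averaged value functions `Q̄Ω, Q̄o, Q̄β, V̄Ω` satisfy the Bellman equations of
the average option MDP with kernel `K̄`; in particular the soft robust value
`∑ p, w p * VΩ s p` is the value function of the average parameterized MDP. -/
theorem averaged_bellman_equations
    [Nonempty S] [Nonempty O] [Nonempty A] [Nonempty P]
    (γ : ℝ) (hγ0 : 0 ≤ γ) (hγ1 : γ < 1)
    (c : S → A → ℝ)
    (K : P → S → A → S → ℝ)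
    (hK0 : ∀ p s a s', 0 ≤ K p s a s') (hK1 : ∀ p s a, ∑ s', K p s a s' = 1)
    (w : P → ℝ) (hw0 : ∀ p, 0 ≤ w p) (hw1 : ∑ p, w p = 1)
    (πΩ : S → O → ℝ)
    (hπΩ0 : ∀ s ω, 0 ≤ πΩ s ω) (hπΩ1 : ∀ s, ∑ ω, πΩ s ω = 1)
    (πo : O → S → A → ℝ)
    (hπo0 : ∀ ω s a, 0 ≤ πo ω s a) (hπo1 : ∀ ω s, ∑ a, πo ω s a = 1)
    (β : O → S → ℝ) (hβ0 : ∀ ω s, 0 ≤ β ω s) (hβ1 : ∀ ω s, β ω s ≤ 1)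
    (QΩ : S → O → P → ℝ) (Qo : S → O → A → P → ℝ)
    (Qβ : S → O → P → ℝ) (VΩ : S → P → ℝ)
    (hQΩ : ∀ s ω p, QΩ s ω p = ∑ a, πo ω s a * Qo s ω a p)
    (hQo : ∀ s ω a p,
      Qo s ω a p = c s a + γ * ∑ s', K p s a s' * (∑ p', w p' * Qβ s' ω p'))
    (hQβ : ∀ s ω p, Qβ s ω p = (1 - β ω s) * QΩ s ω p + β ω s * VΩ s p)
    (hVΩ : ∀ s p, VΩ s p = ∑ ω, πΩ s ω * QΩ s ω p) :
    (∀ s ω, (∑ p, w p * QΩ s ω p) = ∑ a, πo ω s a * (∑ p, w p * Qo s ω a p)) ∧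
    (∀ s ω a, (∑ p, w p * Qo s ω a p) =
      c s a + γ * ∑ s', Kbar w K s a s' * (∑ p, w p * Qβ s' ω p)) ∧
    (∀ s ω, (∑ p, w p * Qβ s ω p) =
      (1 - β ω s) * (∑ p, w p * QΩ s ω p) + β ω s * (∑ p, w p * VΩ s p)) ∧
    (∀ s, (∑ p, w p * VΩ s p) = ∑ ω, πΩ s ω * (∑ p, w p * QΩ s ω p)) := by
  refine ⟨?_, ?_, ?_, ?_⟩
  · intro s ω
    simp only [hQΩ, Finset.mul_sum]
    rw [Finset.sum_comm]
    exact Finset.sum_congr rfl fun a _ => Finset.sum_congr rfl fun p _ => by ring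
  · intro s ω a
    simp only [hQo, mul_add, Finset.sum_add_distrib, ← Finset.sum_mul, hw1, one_mul]
    congr 1
    set B : S → ℝ := fun s' => ∑ p', w p' * Qβ s' ω p' with hB
    simp only [Finset.mul_sum]
    rw [Finset.sum_comm]
    refine Finset.sum_congr rfl fun s' _ => ?_
    rw [Finset.sum_comm]
    simp only [Kbar, Finset.sum_mul, Finset.mul_sum]
    exact Finset.sum_congr rfl fun p _ => Finset.sum_congr rfl fun q _ => by ring
  · intro s ω
    simp only [hQβ, mul_add, Finset.sum_add_distrib, Finset.mul_sum]
    congr 1 <;> exact Finset.sum_congr rfl fun p _ => by ring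
  · intro s
    simp only [hVΩ, Finset.mul_sum]
    rw [Finset.sum_comm]
    exact Finset.sum_congr rfl fun ω _ => Finset.sum_congr rfl fun p _ => by ring
end

section
/- Augmented-MDP loss identity (Eq. 12): Let γ ∈ ℝ with γ > 0, let c : ℕ → ℝ be a sequence of costs, let v ∈ ℝ, λ ≥ 0 and ε > 0, and define x : ℕ → ℝ by x 0 = v and x (t+1) = (x t − c t) / γ. Then for every T ∈ ℕ, the discounted loss of the augmented MDP, in which the extra terminal cost (λ/ε) * max 0 (−(x T)) is added at the terminal step, satisfies: (∑_{t=0}^{T−1} γ^t * c t) + γ^T * ((λ/ε) * max 0 (−(x T))) = (∑_{t=0}^{T−1} γ^t * c t) + (λ/ε) * max 0 ((∑_{t=0}^{T−1} γ^t * c t) − v). That is, the augmented loss C' equals C + (λ/ε) * max(0, C − v) where C = ∑_{t=0}^{T−1} γ^t * c t is the original discounted loss. -/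
theorem pow_mul_eq_sub_sum_of_succ_eq_div {K : Type*} [Field K] {γ : K} (hγ : γ ≠ 0)
    {c x : ℕ → K} (hx : ∀ t, x (t + 1) = (x t - c t) / γ) (T : ℕ) :
    γ ^ T * x T = x 0 - ∑ t ∈ Finset.range T, γ ^ t * c t := by
  induction T with
  | zero => simp
  | succ n ih =>
    rw [Finset.sum_range_succ, hx n, pow_succ, mul_assoc, mul_div_cancel₀ _ hγ]
    linear_combination ih

theorem augmented_mdp_loss_identity_general (γ : ℝ) (hγ : 0 < γ) (c : ℕ → ℝ)
    (v lam ε : ℝ)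
    (x : ℕ → ℝ) (hx0 : x 0 = v) (hx : ∀ t, x (t + 1) = (x t - c t) / γ) :
    ∀ T : ℕ,
      (∑ t ∈ Finset.range T, γ ^ t * c t) +
          γ ^ T * ((lam / ε) * max 0 (-(x T))) =
        (∑ t ∈ Finset.range T, γ ^ t * c t) +
          (lam / ε) * max 0 ((∑ t ∈ Finset.range T, γ ^ t * c t) - v) := by
  intro T
  have hbudget := pow_mul_eq_sub_sum_of_succ_eq_div hγ.ne' hx T
  have hexcess : γ ^ T * max 0 (-(x T)) = max 0 ((∑ t ∈ Finset.range T, γ ^ t * c t) - v) := by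
    rw [mul_max_of_nonneg _ _ (pow_nonneg hγ.le T), mul_zero, mul_neg, hbudget, hx0, neg_sub]
  rw [mul_left_comm, hexcess]

/-- Augmented-MDP loss identity (Eq. 12): the discounted loss of the augmented
MDP, with extra terminal cost `(λ/ε) * max 0 (-(x T))`, equals
`C + (λ/ε) * max 0 (C - v)` where `C = ∑_{t<T} γ^t c t`. -/
theorem augmented_mdp_loss_identity (γ : ℝ) (hγ : 0 < γ) (c : ℕ → ℝ)
    (v lam ε : ℝ) (hlam : 0 ≤ lam) (hε : 0 < ε)
    (x : ℕ → ℝ) (hx0 : x 0 = v) (hx : ∀ t, x (t + 1) = (x t - c t) / γ) :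
    ∀ T : ℕ,
      (∑ t ∈ Finset.range T, γ ^ t * c t) +
          γ ^ T * ((lam / ε) * max 0 (-(x T))) =
        (∑ t ∈ Finset.range T, γ ^ t * c t) +
          (lam / ε) * max 0 ((∑ t ∈ Finset.range T, γ ^ t * c t) - v) :=
  augmented_mdp_loss_identity_general γ hγ c v lam ε x hx0 hx
end

section
/- Derivative of the CVaR constraint term with respect to the tolerance level (Eq. 21): Let (Ω, μ) be a probability space and X : Ω → ℝ an integrable random variable. Fix v₀ ∈ ℝ such that μ {ω | X ω = v₀} = 0. Then the function g : ℝ → ℝ defined by g v := ∫ max 0 (X ω − v) ∂μ(ω) is differentiable at v₀ with derivative g' v₀ = −(μ {ω | X ω ≥ v₀}).toReal, i.e., minus the probability of the event {X ≥ v₀}. -/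
/-!
Every integrand `v ↦ max 0 (X ω - v)` is `1`-Lipschitz, and off the null set `{X = v₀}` it
is differentiable at `v₀` with derivative `-𝟙{v₀ ≤ X ω}`. Since the constant bound `1` is
integrable for a finite measure, differentiation under the integral sign gives the derivative
`-∫ 𝟙{v₀ ≤ X} dμ = -μ {v₀ ≤ X}`.
-/

open MeasureTheory Filter Topology

lemma lipschitzWith_max_zero_const_sub (x : ℝ) : LipschitzWith 1 fun v : ℝ => max 0 (x - v) :=
  (IsometryEquiv.subLeft x).isometry.lipschitz.const_max 0

lemma hasDerivAt_max_zero_const_sub {x v₀ : ℝ} (h : x ≠ v₀) :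
    HasDerivAt (fun v => max 0 (x - v)) (-(Set.Ici v₀).indicator 1 x) v₀ := by
  rcases h.lt_or_gt with hlt | hgt
  · have hzero : (fun v => max 0 (x - v)) =ᶠ[𝓝 v₀] fun _ => 0 := by
      filter_upwards [eventually_gt_nhds hlt] with v hv
      exact max_eq_left (by linarith)
    rw [Set.indicator_of_notMem (Set.notMem_Ici.2 hlt), neg_zero]
    exact (hasDerivAt_const v₀ 0).congr_of_eventuallyEq hzero
  · have hsub : (fun v => max 0 (x - v)) =ᶠ[𝓝 v₀] fun v => x - v := by
      filter_upwards [eventually_lt_nhds hgt] with v hv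
      exact max_eq_right (by linarith)
    rw [Set.indicator_of_mem (Set.mem_Ici.2 hgt.le), Pi.one_apply]
    exact ((hasDerivAt_id v₀).const_sub x).congr_of_eventuallyEq hsub

lemma integral_indicator_one_comp {Ω β : Type*} [MeasurableSpace Ω] [MeasurableSpace β]
    {μ : Measure Ω} {X : Ω → β} (hX : AEMeasurable X μ) {s : Set β} (hs : MeasurableSet s) :
    ∫ ω, s.indicator 1 (X ω) ∂μ = μ.real (X ⁻¹' s) := by
  simp_rw [← Set.indicator_comp_right X, Pi.one_comp]
  rw [integral_indicator₀ (hX.nullMeasurableSet_preimage hs)]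
  simp

/-- Derivative of the CVaR constraint term with respect to the tolerance level
(Eq. 21): if `μ {X = v₀} = 0`, then `v ↦ ∫ max 0 (X - v) dμ` is differentiable
at `v₀` with derivative `-(μ {X ≥ v₀})`. -/
theorem hasDerivAt_cvar_constraint_term {Ω : Type*} [MeasurableSpace Ω]
    (μ : Measure Ω) [IsProbabilityMeasure μ] (X : Ω → ℝ)
    (hX : Integrable X μ) (v₀ : ℝ) (h0 : μ {ω | X ω = v₀} = 0) :
    HasDerivAt (fun v : ℝ => ∫ ω, max 0 (X ω - v) ∂μ)
      (-(μ {ω | v₀ ≤ X ω}).toReal) v₀ := by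
  have hXm : AEMeasurable X μ := hX.aemeasurable
  have hne : ∀ᵐ ω ∂μ, X ω ≠ v₀ := measure_eq_zero_iff_ae_notMem.1 h0
  obtain ⟨-, hderiv⟩ := hasDerivAt_integral_of_dominated_loc_of_lip
    (F := fun v ω => max 0 (X ω - v)) (F' := fun ω => -(Set.Ici v₀).indicator 1 (X ω))
    (bound := fun _ => 1) univ_mem
    (Eventually.of_forall fun v => (aemeasurable_const.max (hXm.sub_const v)).aestronglyMeasurable)
    ((hX.sub (integrable_const v₀)).pos_part.congr (ae_of_all _ fun ω => max_comm _ _))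
    ((measurable_one.indicator measurableSet_Ici).comp_aemeasurable hXm).aestronglyMeasurable.neg
    (ae_of_all _ fun ω => by simpa using lipschitzWith_max_zero_const_sub (X ω))
    (integrable_const 1) (hne.mono fun ω => hasDerivAt_max_zero_const_sub)
  rwa [integral_neg, integral_indicator_one_comp hXm measurableSet_Ici, measureReal_def] at hderiv
end

section
/- Equivalence of the CVaR constraint and the Rockafellar–Uryasev constraint (equivalence of Eq. 2 and Eq. 4): Let (Ω, μ) be a probability space, X : Ω → ℝ an integrable random variable, ε ∈ ℝ with 0 < ε < 1, and ζ ∈ ℝ. Then: (0) the set A := {z : ℝ | (μ {ω | X ω ≥ z}).toReal ≥ ε} is nonempty and bounded above, so q := sSup A (the upper ε-value-at-risk VaR_ε(X)) is well-defined. Assume moreover (μ {ω | X ω ≥ q}).toReal = ε. Then: (i) for every v ∈ ℝ, q + (1/ε) * ∫ max 0 (X − q) ∂μ ≤ v + (1/ε) * ∫ max 0 (X − v) ∂μ; (ii) q + (1/ε) * ∫ max 0 (X − q) ∂μ = (1/ε) * ∫_{ {ω | X ω ≥ q} } X ∂μ (the conditional expectation of X given X ≥ q, i.e., CVaR_ε(X));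 and consequently (iii) (1/ε) * ∫_{ {ω | X ω ≥ q} } X ∂μ ≤ ζ if and only if there exists v ∈ ℝ with v + (1/ε) * ∫ max 0 (X − v) ∂μ ≤ ζ. -/
/-!
With `S = {X ≥ q}` and `μ S = ε`, the positive part `(X - q)⁺` is `(X - q) 𝟙_S`, so the
Rockafellar–Uryasev function `F(v) = v + ε⁻¹ E[(X - v)⁺]` takes the value `ε⁻¹ ∫_S X` at `v = q`.
For any other `v`, bounding `(X - v)⁺ ≥ (X - v) 𝟙_S` gives `F(v) ≥ ε⁻¹ ∫_S X`, so `q` minimises `F`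
and the two constraints `CVaR ≤ ζ` and `∃ v, F(v) ≤ ζ` coincide.
-/

open MeasureTheory Filter Topology

namespace MeasureTheory

variable {Ω : Type*} [MeasurableSpace Ω] (μ : Measure Ω) [IsFiniteMeasure μ] {X : Ω → ℝ}

theorem tendsto_measureReal_setOf_le_atBot (X : Ω → ℝ) :
    Tendsto (fun z => μ.real {ω | z ≤ X ω}) atBot (𝓝 (μ.real Set.univ)) := by
  have hunion : (⋃ z : ℝ, {ω | z ≤ X ω}) = Set.univ :=
    Set.eq_univ_of_forall fun ω => Set.mem_iUnion.2 ⟨X ω, show X ω ≤ X ω from le_rfl⟩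
  have h := tendsto_measure_iUnion_atBot (μ := μ)
    (fun _ _ hzw _ hω => le_trans hzw hω : Antitone fun z : ℝ => {ω | z ≤ X ω})
  rw [hunion] at h
  exact (ENNReal.tendsto_toReal (measure_ne_top μ _)).comp h

theorem tendsto_measureReal_setOf_le_atTop (hX : AEMeasurable X μ) :
    Tendsto (fun z => μ.real {ω | z ≤ X ω}) atTop (𝓝 0) := by
  have hinter : (⋂ z : ℝ, {ω | z ≤ X ω}) = ∅ :=
    Set.eq_empty_of_forall_notMem fun ω hω =>
      (lt_add_one (X ω)).not_ge (Set.mem_iInter.1 hω (X ω + 1))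
  have h := tendsto_measure_iInter_atTop (μ := μ)
    (fun _ => nullMeasurableSet_le aemeasurable_const hX)
    (fun _ _ hzw _ hω => le_trans hzw hω : Antitone fun z : ℝ => {ω | z ≤ X ω})
    ⟨0, measure_ne_top μ _⟩
  rw [hinter, measure_empty] at h
  exact (ENNReal.tendsto_toReal ENNReal.zero_ne_top).comp h

theorem exists_le_measureReal_setOf_le {ε : ℝ} (hε : ε < μ.real Set.univ) (X : Ω → ℝ) :
    ∃ z, ε ≤ μ.real {ω | z ≤ X ω} :=
  ((tendsto_measureReal_setOf_le_atBot μ X).eventually (eventually_ge_nhds hε)).exists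

theorem bddAbove_setOf_le_measureReal_setOf_le (hX : AEMeasurable X μ) {ε : ℝ} (hε : 0 < ε) :
    BddAbove {z | ε ≤ μ.real {ω | z ≤ X ω}} := by
  obtain ⟨b, hb⟩ := eventually_atTop.1
    ((tendsto_measureReal_setOf_le_atTop μ hX).eventually (eventually_lt_nhds hε))
  exact ⟨b, fun z hz => not_lt.1 fun hbz => (hb z hbz.le).not_ge hz⟩

theorem integral_max_zero_sub_eq_setIntegral (hX : Integrable X μ) (c : ℝ) :
    ∫ ω, max 0 (X ω - c) ∂μ =
      ∫ ω in {ω | c ≤ X ω}, X ω ∂μ - c * μ.real {ω | c ≤ X ω} := by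
  have hpos : (fun ω => max 0 (X ω - c)) = {ω | c ≤ X ω}.indicator fun ω => X ω - c := by
    funext ω
    by_cases hω : c ≤ X ω
    · simp [hω]
    · simp [hω, (not_le.1 hω).le]
  rw [hpos, integral_indicator₀ (nullMeasurableSet_le aemeasurable_const hX.aemeasurable),
    integral_sub hX.integrableOn (integrable_const c), setIntegral_const, smul_eq_mul, mul_comm]

theorem setIntegral_sub_le_integral_max_zero_sub (hX : Integrable X μ) (S : Set Ω) (v : ℝ) :
    ∫ ω in S, X ω ∂μ - v * μ.real S ≤ ∫ ω, max 0 (X ω - v) ∂μ := by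
  have hpos : Integrable (fun ω => max 0 (X ω - v)) μ :=
    (integrable_const 0).sup (hX.sub (integrable_const v))
  calc ∫ ω in S, X ω ∂μ - v * μ.real S = ∫ ω in S, (X ω - v) ∂μ := by
        rw [integral_sub hX.integrableOn (integrable_const v), setIntegral_const, smul_eq_mul,
          mul_comm]
    _ ≤ ∫ ω in S, max 0 (X ω - v) ∂μ :=
        setIntegral_mono (hX.sub (integrable_const v)).integrableOn hpos.integrableOn
          fun ω => le_max_right _ _
    _ ≤ ∫ ω, max 0 (X ω - v) ∂μ :=
        setIntegral_le_integral hpos (ae_of_all _ fun ω => le_max_left _ _)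

end MeasureTheory

namespace ProbabilityTheory

noncomputable def rockafellarUryasev {Ω : Type*} [MeasurableSpace Ω] (μ : Measure Ω)
    (X : Ω → ℝ) (ε v : ℝ) : ℝ :=
  v + (1 / ε) * ∫ ω, max 0 (X ω - v) ∂μ

variable {Ω : Type*} [MeasurableSpace Ω] (μ : Measure Ω) [IsFiniteMeasure μ] {X : Ω → ℝ}

theorem rockafellarUryasev_eq_setIntegral (hX : Integrable X μ) {ε c : ℝ} (hε : ε ≠ 0)
    (hc : μ.real {ω | c ≤ X ω} = ε) :
    rockafellarUryasev μ X ε c = (1 / ε) * ∫ ω in {ω | c ≤ X ω}, X ω ∂μ := by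
  rw [rockafellarUryasev, integral_max_zero_sub_eq_setIntegral μ hX c, hc]
  field_simp
  ring

theorem setIntegral_le_rockafellarUryasev (hX : Integrable X μ) {ε : ℝ} (hε : 0 < ε)
    {S : Set Ω} (hS : μ.real S = ε) (v : ℝ) :
    (1 / ε) * ∫ ω in S, X ω ∂μ ≤ rockafellarUryasev μ X ε v := by
  have h := setIntegral_sub_le_integral_max_zero_sub μ hX S v
  rw [hS] at h
  rw [rockafellarUryasev, one_div, inv_mul_le_iff₀ hε, mul_add, mul_inv_cancel_left₀ hε.ne']
  linarith

end ProbabilityTheory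

open ProbabilityTheory in
/-- Equivalence of the CVaR constraint and the Rockafellar–Uryasev constraint
(equivalence of Eq. 2 and Eq. 4). Here
`A = {z | μ {X ≥ z} ≥ ε}` and `q = sSup A = VaR_ε(X)`. -/
theorem cvar_rockafellar_uryasev_equivalence {Ω : Type*} [MeasurableSpace Ω]
    (μ : Measure Ω) [IsProbabilityMeasure μ] (X : Ω → ℝ)
    (hX : Integrable X μ) (ε ζ : ℝ) (hε0 : 0 < ε) (hε1 : ε < 1) :
    Set.Nonempty {z : ℝ | ε ≤ (μ {ω | z ≤ X ω}).toReal} ∧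
    BddAbove {z : ℝ | ε ≤ (μ {ω | z ≤ X ω}).toReal} ∧
    ((μ {ω | sSup {z : ℝ | ε ≤ (μ {ω | z ≤ X ω}).toReal} ≤ X ω}).toReal = ε →
      ((∀ v : ℝ,
          sSup {z : ℝ | ε ≤ (μ {ω | z ≤ X ω}).toReal} +
              (1 / ε) * ∫ ω, max 0
                (X ω - sSup {z : ℝ | ε ≤ (μ {ω | z ≤ X ω}).toReal}) ∂μ ≤
            v + (1 / ε) * ∫ ω, max 0 (X ω - v) ∂μ) ∧
        (sSup {z : ℝ | ε ≤ (μ {ω | z ≤ X ω}).toReal} +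
            (1 / ε) * ∫ ω, max 0
              (X ω - sSup {z : ℝ | ε ≤ (μ {ω | z ≤ X ω}).toReal}) ∂μ =
          (1 / ε) *
            ∫ ω in {ω | sSup {z : ℝ | ε ≤ (μ {ω | z ≤ X ω}).toReal} ≤ X ω},
              X ω ∂μ) ∧
        ((1 / ε) *
            (∫ ω in {ω | sSup {z : ℝ | ε ≤ (μ {ω | z ≤ X ω}).toReal} ≤ X ω},
              X ω ∂μ) ≤ ζ ↔
          ∃ v : ℝ, v + (1 / ε) * ∫ ω, max 0 (X ω - v) ∂μ ≤ ζ))) := by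
  refine ⟨exists_le_measureReal_setOf_le μ (by simpa using hε1) X,
    bddAbove_setOf_le_measureReal_setOf_le μ hX.aemeasurable hε0, fun hq => ?_⟩
  have hcvar := rockafellarUryasev_eq_setIntegral μ hX hε0.ne' hq
  have hmin := setIntegral_le_rockafellarUryasev μ hX hε0 hq
  exact ⟨fun v => hcvar.trans_le (hmin v), hcvar,
    fun h => ⟨_, hcvar.trans_le h⟩, fun ⟨v, hv⟩ => (hmin v).trans hv⟩
end

section
/- One-step recursion for the soft robust intra-option policy gradient (intermediate claim in the proof of Theorem 2): In the setting of the intra-option policy gradient theorem (parameterized family πo : ℝ → O → S → A → ℝ, θ-independent πΩ, β, K, c, w, value functions (QΩ θ, Qo θ, Qβ θ, VΩ θ) satisfying the rectangular Bellman system for each θ, differentiability of πo and QΩ in θ at θ₀), for all s ∈ S and ω ∈ O: ∑_p w p * deriv (θ ↦ QΩ θ s ω p) θ₀ = (∑_a (deriv (θ ↦ πo θ ω s a) θ₀) * Q̄o θ₀ s ω a) + ∑_{(s',ω')} Pγ θ₀ ((s,ω),(s',ω')) * (∑_{p'} w p' * deriv (θ ↦ QΩ θ s' ω' p') θ₀).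 -/
/-!
Rectangularity makes the `w`-averaged value functions close up into an ordinary option Bellman
system with the mean kernel `K̄` and the value upon arrival `(1 - β) Q̄Ω + β V̄Ω`. Differentiating
that system with the product rule splits the derivative into the explicit term coming from `πo`
and the derivative of the value upon arrival propagated one step by `K̄`; summing the latter over
the next option is exactly one application of `Pγ`.
-/

open scoped Classical

open Finset

variable {S O A P : Type*} [Fintype S] [Fintype O] [Fintype A] [Fintype P]

/-- The option-value upon arrival `U`: the Bellman system reads `Qβ = arrivalValue β πΩ QΩ`. -/
noncomputable def arrivalValue {S O : Type*} [Fintype O] (β : O → S → ℝ) (πΩ : S → O → ℝ)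
    (f : S → O → ℝ) (s : S) (ω : O) : ℝ :=
  (1 - β ω s) * f s ω + β ω s * ∑ ω', πΩ s ω' * f s ω'

section ArrivalValue

variable {S O ι : Type*} [Fintype O] [Fintype ι] (β : O → S → ℝ) (πΩ : S → O → ℝ)

theorem sum_transition_mul_eq_arrivalValue (f : S → O → ℝ) (s : S) (ω : O) :
    ∑ ω', ((1 - β ω s) * (if ω' = ω then 1 else 0) + β ω s * πΩ s ω') * f s ω' =
      arrivalValue β πΩ f s ω := by
  simp only [arrivalValue, add_mul, sum_add_distrib, mul_ite, mul_one, mul_zero, ite_mul,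
    zero_mul, sum_ite_eq', mem_univ, if_true, mul_sum, mul_assoc]

theorem sum_mul_arrivalValue (w : ι → ℝ) (g : ι → S → O → ℝ) (s : S) (ω : O) :
    ∑ i, w i * arrivalValue β πΩ (g i) s ω =
      arrivalValue β πΩ (fun s ω => ∑ i, w i * g i s ω) s ω := by
  simp only [arrivalValue, mul_add, sum_add_distrib, mul_sum]
  congr 1
  · exact sum_congr rfl fun i _ => by ring
  · rw [sum_comm]
    exact sum_congr rfl fun ω' _ => sum_congr rfl fun i _ => by ring

theorem HasDerivAt.arrivalValue {f : ℝ → S → O → ℝ} {f' : S → O → ℝ} {θ₀ : ℝ}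
    (hf : ∀ s ω, HasDerivAt (fun θ => f θ s ω) (f' s ω) θ₀) (s : S) (ω : O) :
    HasDerivAt (fun θ => _root_.arrivalValue β πΩ (f θ) s ω)
      (_root_.arrivalValue β πΩ f' s ω) θ₀ :=
  ((hf s ω).const_mul _).add
    ((HasDerivAt.fun_sum fun ω' _ => (hf s ω').const_mul (πΩ s ω')).const_mul _)

end ArrivalValue

theorem sum_Pgam_mul_s11 (w : P → ℝ) (K : P → S → A → S → ℝ) (γ : ℝ) (πo : O → S → A → ℝ)
    (β : O → S → ℝ) (πΩ : S → O → ℝ) (f : S → O → ℝ) (s : S) (ω : O) :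
    ∑ q : S × O, Pgam w K γ πo β πΩ (s, ω) q * f q.1 q.2 =
      ∑ a, πo ω s a * (γ * ∑ s', Kbar w K s a s' * arrivalValue β πΩ f s' ω) := by
  simp only [Pgam, Fintype.sum_prod_type, sum_mul, ← sum_transition_mul_eq_arrivalValue, mul_sum]
  refine (sum_congr rfl fun s' _ => sum_comm).trans (sum_comm.trans ?_)
  exact sum_congr rfl fun a _ => sum_congr rfl fun s' _ => sum_congr rfl fun ω' _ => by ring

omit [Fintype A] in
theorem sum_weight_mul_backup (w : P → ℝ) (K : P → S → A → S → ℝ) (γ r : ℝ) (v : S → ℝ)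
    (s : S) (a : A) :
    ∑ p, w p * (r + γ * ∑ s', K p s a s' * v s') =
      (∑ p, w p) * r + γ * ∑ s', Kbar w K s a s' * v s' := by
  simp only [Kbar, mul_add, sum_add_distrib, sum_mul, mul_sum]
  congr 1
  rw [sum_comm]
  exact sum_congr rfl fun s' _ => sum_congr rfl fun p _ => by ring

section AveragedBellman

variable {γ : ℝ} {c : S → A → ℝ} {K : P → S → A → S → ℝ} {w : P → ℝ} {πΩ : S → O → ℝ}
  {πo : O → S → A → ℝ} {β : O → S → ℝ} {QΩ : S → O → P → ℝ} {Qo : S → O → A → P → ℝ}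
  {Qβ : S → O → P → ℝ} {VΩ : S → P → ℝ}

omit [Fintype S] [Fintype O] in
theorem sum_weight_mul_QΩ (hQΩ : ∀ s ω p, QΩ s ω p = ∑ a, πo ω s a * Qo s ω a p)
    (s : S) (ω : O) :
    ∑ p, w p * QΩ s ω p = ∑ a, πo ω s a * ∑ p, w p * Qo s ω a p := by
  simp only [hQΩ, mul_sum]
  rw [sum_comm]
  exact sum_congr rfl fun a _ => sum_congr rfl fun p _ => by ring

omit [Fintype A] in
theorem sum_weight_mul_Qo
    (hQo : ∀ s ω a p, Qo s ω a p = c s a + γ * ∑ s', K p s a s' * (∑ p', w p' * Qβ s' ω p'))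
    (hQβ : ∀ s ω p, Qβ s ω p = (1 - β ω s) * QΩ s ω p + β ω s * VΩ s p)
    (hVΩ : ∀ s p, VΩ s p = ∑ ω, πΩ s ω * QΩ s ω p) (s : S) (ω : O) (a : A) :
    ∑ p, w p * Qo s ω a p = (∑ p, w p) * c s a +
      γ * ∑ s', Kbar w K s a s' * arrivalValue β πΩ (fun s ω => ∑ p, w p * QΩ s ω p) s' ω := by
  have hQβ_eq : ∀ s' p', Qβ s' ω p' = arrivalValue β πΩ (fun s ω => QΩ s ω p') s' ω :=
    fun s' p' => by rw [hQβ, hVΩ, arrivalValue]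
  simp only [hQo, hQβ_eq, sum_mul_arrivalValue, sum_weight_mul_backup]

end AveragedBellman

theorem option_bellman_derivative_eq {π : ℝ → O → S → A → ℝ} {π' : O → S → A → ℝ}
    {Q : ℝ → S → O → ℝ} {Q' : S → O → ℝ} {q : ℝ → S → O → A → ℝ} {R : S → A → ℝ}
    {M : S → A → S → ℝ} {γ : ℝ} {β : O → S → ℝ} {πΩ : S → O → ℝ} {θ₀ : ℝ}
    (hQ : ∀ θ s ω, Q θ s ω = ∑ a, π θ ω s a * q θ s ω a)
    (hq : ∀ θ s ω a, q θ s ω a = R s a + γ * ∑ s', M s a s' * arrivalValue β πΩ (Q θ) s' ω)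
    (hπ : ∀ ω s a, HasDerivAt (fun θ => π θ ω s a) (π' ω s a) θ₀)
    (hQ' : ∀ s ω, HasDerivAt (fun θ => Q θ s ω) (Q' s ω) θ₀) (s : S) (ω : O) :
    Q' s ω = ∑ a, π' ω s a * q θ₀ s ω a +
      ∑ a, π θ₀ ω s a * (γ * ∑ s', M s a s' * arrivalValue β πΩ Q' s' ω) := by
  have hq' : ∀ a, HasDerivAt (fun θ => q θ s ω a)
      (γ * ∑ s', M s a s' * arrivalValue β πΩ Q' s' ω) θ₀ := fun a => by
    simpa only [hq] using ((HasDerivAt.fun_sum fun s' _ =>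
      (HasDerivAt.arrivalValue β πΩ hQ' s' ω).const_mul (M s a s')).const_mul γ).const_add
        (R s a)
  have hQ'' : HasDerivAt (fun θ => Q θ s ω)
      (∑ a, (π' ω s a * q θ₀ s ω a + π θ₀ ω s a * (γ * ∑ s', M s a s' *
        arrivalValue β πΩ Q' s' ω))) θ₀ := by
    rw [show (fun θ => Q θ s ω) = _ from funext fun θ => hQ θ s ω]
    exact HasDerivAt.fun_sum fun a _ => (hπ ω s a).mul (hq' a)
  rw [(hQ' s ω).unique hQ'', sum_add_distrib]

theorem intra_option_policy_gradient_one_step_general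
    (γ : ℝ)
    (c : S → A → ℝ)
    (K : P → S → A → S → ℝ)
    (w : P → ℝ)
    (πΩ : S → O → ℝ)
    (πo : ℝ → O → S → A → ℝ)
    (β : O → S → ℝ)
    (QΩ : ℝ → S → O → P → ℝ) (Qo : ℝ → S → O → A → P → ℝ)
    (Qβ : ℝ → S → O → P → ℝ) (VΩ : ℝ → S → P → ℝ)
    (hQΩ : ∀ θ s ω p, QΩ θ s ω p = ∑ a, πo θ ω s a * Qo θ s ω a p)
    (hQo : ∀ θ s ω a p,
      Qo θ s ω a p = c s a + γ * ∑ s', K p s a s' * (∑ p', w p' * Qβ θ s' ω p'))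
    (hQβ : ∀ θ s ω p, Qβ θ s ω p = (1 - β ω s) * QΩ θ s ω p + β ω s * VΩ θ s p)
    (hVΩ : ∀ θ s p, VΩ θ s p = ∑ ω, πΩ s ω * QΩ θ s ω p)
    (θ₀ : ℝ)
    (hdπ : ∀ ω s a, DifferentiableAt ℝ (fun θ => πo θ ω s a) θ₀)
    (hdQ : ∀ s ω p, DifferentiableAt ℝ (fun θ => QΩ θ s ω p) θ₀) :
    ∀ (s : S) (ω : O),
      ∑ p, w p * deriv (fun θ => QΩ θ s ω p) θ₀ =
        (∑ a, deriv (fun θ => πo θ ω s a) θ₀ * (∑ p, w p * Qo θ₀ s ω a p)) +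
        ∑ q : S × O, Pgam w K γ (πo θ₀) β πΩ (s, ω) q *
          (∑ p', w p' * deriv (fun θ => QΩ θ q.1 q.2 p') θ₀) := by
  intro s ω
  have hQbar_deriv : ∀ s ω, HasDerivAt (fun θ => ∑ p, w p * QΩ θ s ω p)
      (∑ p, w p * deriv (fun θ => QΩ θ s ω p) θ₀) θ₀ := fun s ω =>
    HasDerivAt.fun_sum fun p _ => (hdQ s ω p).hasDerivAt.const_mul (w p)
  rw [sum_Pgam_mul_s11 w K γ (πo θ₀) β πΩ (fun s ω => ∑ p', w p' * deriv (fun θ => QΩ θ s ω p') θ₀)]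
  exact option_bellman_derivative_eq (fun θ => sum_weight_mul_QΩ (hQΩ θ))
    (fun θ => sum_weight_mul_Qo (hQo θ) (hQβ θ) (hVΩ θ)) (fun ω s a => (hdπ ω s a).hasDerivAt)
    hQbar_deriv s ω

/-- One-step recursion for the soft robust intra-option policy gradient
(intermediate claim in the proof of Theorem 2). -/
theorem intra_option_policy_gradient_one_step
    [Nonempty S] [Nonempty O] [Nonempty A] [Nonempty P]
    (γ : ℝ) (hγ0 : 0 ≤ γ) (hγ1 : γ < 1)
    (c : S → A → ℝ)
    (K : P → S → A → S → ℝ)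
    (hK0 : ∀ p s a s', 0 ≤ K p s a s') (hK1 : ∀ p s a, ∑ s', K p s a s' = 1)
    (w : P → ℝ) (hw0 : ∀ p, 0 ≤ w p) (hw1 : ∑ p, w p = 1)
    (πΩ : S → O → ℝ)
    (hπΩ0 : ∀ s ω, 0 ≤ πΩ s ω) (hπΩ1 : ∀ s, ∑ ω, πΩ s ω = 1)
    (πo : ℝ → O → S → A → ℝ)
    (hπo0 : ∀ θ ω s a, 0 ≤ πo θ ω s a) (hπo1 : ∀ θ ω s, ∑ a, πo θ ω s a = 1)
    (β : O → S → ℝ) (hβ0 : ∀ ω s, 0 ≤ β ω s) (hβ1 : ∀ ω s, β ω s ≤ 1)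
    (QΩ : ℝ → S → O → P → ℝ) (Qo : ℝ → S → O → A → P → ℝ)
    (Qβ : ℝ → S → O → P → ℝ) (VΩ : ℝ → S → P → ℝ)
    (hQΩ : ∀ θ s ω p, QΩ θ s ω p = ∑ a, πo θ ω s a * Qo θ s ω a p)
    (hQo : ∀ θ s ω a p,
      Qo θ s ω a p = c s a + γ * ∑ s', K p s a s' * (∑ p', w p' * Qβ θ s' ω p'))
    (hQβ : ∀ θ s ω p, Qβ θ s ω p = (1 - β ω s) * QΩ θ s ω p + β ω s * VΩ θ s p)
    (hVΩ : ∀ θ s p, VΩ θ s p = ∑ ω, πΩ s ω * QΩ θ s ω p)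
    (θ₀ : ℝ)
    (hdπ : ∀ ω s a, DifferentiableAt ℝ (fun θ => πo θ ω s a) θ₀)
    (hdQ : ∀ s ω p, DifferentiableAt ℝ (fun θ => QΩ θ s ω p) θ₀) :
    ∀ (s : S) (ω : O),
      ∑ p, w p * deriv (fun θ => QΩ θ s ω p) θ₀ =
        (∑ a, deriv (fun θ => πo θ ω s a) θ₀ * (∑ p, w p * Qo θ₀ s ω a p)) +
        ∑ q : S × O, Pgam w K γ (πo θ₀) β πΩ (s, ω) q *
          (∑ p', w p' * deriv (fun θ => QΩ θ q.1 q.2 p') θ₀) :=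
  intra_option_policy_gradient_one_step_general γ c K w πΩ πo β QΩ Qo Qβ VΩ hQΩ hQo hQβ hVΩ θ₀ hdπ
    hdQ
end

section
/- Existence and uniqueness of the rectangular Bellman system solution (well-posedness of the soft robust option value functions): In the finite rectangular option MDP with 0 ≤ γ < 1, there exists exactly one quadruple of functions (QΩ : S → O → P → ℝ, Qo : S → O → A → P → ℝ, Qβ : S → O → P → ℝ, VΩ : S → P → ℝ) satisfying the rectangular Bellman system, i.e., satisfying for all s, ω, a, p: QΩ s ω p = ∑_a πo ω s a * Qo s ω a p; Qo s ω a p = c s a + γ * ∑_{s'} K p s a s' * (∑_{p'} w p' * Qβ s' ω p'); Qβ s ω p = (1 − β ω s) * QΩ s ω p + β ω s * (∑_ω πΩ s ω * QΩ s ω p); VΩ s p = ∑_ω πΩ s ω * QΩ s ω p. -/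
open Finset

private lemma abs_weighted_le {ι : Type*} [Fintype ι] (u h : ι → ℝ)
    (hu0 : ∀ i, 0 ≤ u i) (hu1 : ∑ i, u i = 1) {D : ℝ} (hh : ∀ i, |h i| ≤ D) :
    |∑ i, u i * h i| ≤ D := by
  calc |∑ i, u i * h i| ≤ ∑ i, |u i * h i| := Finset.abs_sum_le_sum_abs _ _
    _ = ∑ i, u i * |h i| := by
        refine Finset.sum_congr rfl fun i _ => ?_
        rw [abs_mul, abs_of_nonneg (hu0 i)]
    _ ≤ ∑ i, u i * D :=
        Finset.sum_le_sum fun i _ => mul_le_mul_of_nonneg_left (hh i) (hu0 i)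
    _ = D := by rw [← Finset.sum_mul, hu1, one_mul]

/-- Existence and uniqueness of the rectangular Bellman system solution
(well-posedness of the soft robust option value functions): in the finite
rectangular option MDP with `0 ≤ γ < 1`, there is exactly one quadruple
`(QΩ, Qo, Qβ, VΩ)` satisfying the rectangular Bellman system. -/
theorem rectangular_bellman_existsUnique
    {S O A P : Type*} [Fintype S] [Fintype O] [Fintype A] [Fintype P]
    [Nonempty S] [Nonempty O] [Nonempty A] [Nonempty P]
    (γ : ℝ) (hγ0 : 0 ≤ γ) (hγ1 : γ < 1)
    (c : S → A → ℝ)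
    (K : P → S → A → S → ℝ)
    (hK0 : ∀ p s a s', 0 ≤ K p s a s') (hK1 : ∀ p s a, ∑ s', K p s a s' = 1)
    (w : P → ℝ) (hw0 : ∀ p, 0 ≤ w p) (hw1 : ∑ p, w p = 1)
    (πΩ : S → O → ℝ)
    (hπΩ0 : ∀ s ω, 0 ≤ πΩ s ω) (hπΩ1 : ∀ s, ∑ ω, πΩ s ω = 1)
    (πo : O → S → A → ℝ)
    (hπo0 : ∀ ω s a, 0 ≤ πo ω s a) (hπo1 : ∀ ω s, ∑ a, πo ω s a = 1)
    (β : O → S → ℝ) (hβ0 : ∀ ω s, 0 ≤ β ω s) (hβ1 : ∀ ω s, β ω s ≤ 1) :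
    ∃! F : (S → O → P → ℝ) × (S → O → A → P → ℝ) × (S → O → P → ℝ) × (S → P → ℝ),
      (∀ s ω p, F.1 s ω p = ∑ a, πo ω s a * F.2.1 s ω a p) ∧
      (∀ s ω a p, F.2.1 s ω a p =
        c s a + γ * ∑ s', K p s a s' * (∑ p', w p' * F.2.2.1 s' ω p')) ∧
      (∀ s ω p, F.2.2.1 s ω p =
        (1 - β ω s) * F.1 s ω p + β ω s * (∑ ω', πΩ s ω' * F.1 s ω' p)) ∧
      (∀ s p, F.2.2.2 s p = ∑ ω, πΩ s ω * F.1 s ω p) := by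
  classical
  -- one-step value map and Bellman operator on Qβ
  set g : (S → O → P → ℝ) → S → O → P → ℝ :=
    fun f s ω p => ∑ a, πo ω s a *
      (c s a + γ * ∑ s', K p s a s' * (∑ p', w p' * f s' ω p')) with hg
  set T : (S → O → P → ℝ) → (S → O → P → ℝ) :=
    fun f s ω p => (1 - β ω s) * g f s ω p + β ω s * ∑ ω', πΩ s ω' * g f s ω' p
    with hTdef
  -- pointwise Lipschitz estimate for g
  have hgLip : ∀ f f' : (S → O → P → ℝ), ∀ s ω p,
      |g f s ω p - g f' s ω p| ≤ γ * dist f f' := by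
    intro f f' s ω p
    have hpt : ∀ s' ω' p', |f s' ω' p' - f' s' ω' p'| ≤ dist f f' := by
      intro s' ω' p'
      have h1 : dist (f s' ω' p') (f' s' ω' p') ≤ dist (f s' ω') (f' s' ω') :=
        dist_le_pi_dist (f s' ω') (f' s' ω') p'
      have h2 : dist (f s' ω') (f' s' ω') ≤ dist (f s') (f' s') :=
        dist_le_pi_dist (f s') (f' s') ω'
      have h3 : dist (f s') (f' s') ≤ dist f f' := dist_le_pi_dist f f' s'
      rw [← Real.dist_eq]
      linarith
    have hX : ∀ a, |(∑ s', K p s a s' * (∑ p', w p' * f s' ω p')) -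
        (∑ s', K p s a s' * (∑ p', w p' * f' s' ω p'))| ≤ dist f f' := by
      intro a
      rw [← Finset.sum_sub_distrib]
      have : ∀ s', K p s a s' * (∑ p', w p' * f s' ω p') -
          K p s a s' * (∑ p', w p' * f' s' ω p') =
          K p s a s' * (∑ p', w p' * (f s' ω p' - f' s' ω p')) := by
        intro s'
        rw [← mul_sub, ← Finset.sum_sub_distrib]
        congr 1
        refine Finset.sum_congr rfl fun p' _ => ?_
        ring
      simp only [this]
      exact abs_weighted_le _ _ (fun s' => hK0 p s a s') (hK1 p s a)
        (fun s' => abs_weighted_le _ _ hw0 hw1 (fun p' => hpt s' ω p'))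
    have : g f s ω p - g f' s ω p = γ * ∑ a, πo ω s a *
        ((∑ s', K p s a s' * (∑ p', w p' * f s' ω p')) -
         (∑ s', K p s a s' * (∑ p', w p' * f' s' ω p'))) := by
      simp only [hg]
      rw [← Finset.sum_sub_distrib, Finset.mul_sum]
      refine Finset.sum_congr rfl fun a _ => ?_
      ring
    rw [this, abs_mul, abs_of_nonneg hγ0]
    exact mul_le_mul_of_nonneg_left
      (abs_weighted_le _ _ (fun a => hπo0 ω s a) (hπo1 ω s) hX) hγ0
  -- T is γ-Lipschitz
  have hTLip : ∀ f f' : (S → O → P → ℝ), dist (T f) (T f') ≤ γ * dist f f' := by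
    intro f f'
    have hnn : 0 ≤ γ * dist f f' := mul_nonneg hγ0 dist_nonneg
    rw [dist_pi_le_iff hnn]
    intro s
    rw [dist_pi_le_iff hnn]
    intro ω
    rw [dist_pi_le_iff hnn]
    intro p
    rw [Real.dist_eq]
    have h1 : |g f s ω p - g f' s ω p| ≤ γ * dist f f' := hgLip f f' s ω p
    have h2 : |(∑ ω', πΩ s ω' * g f s ω' p) - (∑ ω', πΩ s ω' * g f' s ω' p)|
        ≤ γ * dist f f' := by
      rw [← Finset.sum_sub_distrib]
      have : ∀ ω', πΩ s ω' * g f s ω' p - πΩ s ω' * g f' s ω' p =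
          πΩ s ω' * (g f s ω' p - g f' s ω' p) := fun ω' => by ring
      simp only [this]
      exact abs_weighted_le _ _ (hπΩ0 s) (hπΩ1 s) (fun ω' => hgLip f f' s ω' p)
    have key : T f s ω p - T f' s ω p =
        (1 - β ω s) * (g f s ω p - g f' s ω p) +
        β ω s * ((∑ ω', πΩ s ω' * g f s ω' p) - (∑ ω', πΩ s ω' * g f' s ω' p)) := by
      simp only [hTdef]; ring
    rw [key]
    have hb0 : 0 ≤ 1 - β ω s := by linarith [hβ1 ω s]
    calc |(1 - β ω s) * (g f s ω p - g f' s ω p) +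
        β ω s * ((∑ ω', πΩ s ω' * g f s ω' p) - (∑ ω', πΩ s ω' * g f' s ω' p))|
        ≤ |(1 - β ω s) * (g f s ω p - g f' s ω p)| +
          |β ω s * ((∑ ω', πΩ s ω' * g f s ω' p) - (∑ ω', πΩ s ω' * g f' s ω' p))| :=
        abs_add_le _ _
      _ = (1 - β ω s) * |g f s ω p - g f' s ω p| +
          β ω s * |(∑ ω', πΩ s ω' * g f s ω' p) - (∑ ω', πΩ s ω' * g f' s ω' p)| := by
        rw [abs_mul, abs_mul, abs_of_nonneg hb0, abs_of_nonneg (hβ0 ω s)]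
      _ ≤ (1 - β ω s) * (γ * dist f f') + β ω s * (γ * dist f f') := by
        exact add_le_add (mul_le_mul_of_nonneg_left h1 hb0)
          (mul_le_mul_of_nonneg_left h2 (hβ0 ω s))
      _ = γ * dist f f' := by ring
  -- contraction
  set γ' : NNReal := ⟨γ, hγ0⟩ with hγ'
  have hC : ContractingWith γ' T := by
    constructor
    · exact_mod_cast hγ1
    · exact LipschitzWith.of_dist_le_mul fun f f' => hTLip f f'
  set Qβ : S → O → P → ℝ := hC.fixedPoint T with hQβ
  have hfix : T Qβ = Qβ := hC.fixedPoint_isFixedPt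
  -- uniqueness of fixed points of T
  have huniq : ∀ x : S → O → P → ℝ, T x = x → x = Qβ := by
    intro x hx
    have h := hTLip x Qβ
    rw [hx, hfix] at h
    have hd : dist x Qβ = 0 := by nlinarith [dist_nonneg (x := x) (y := Qβ)]
    exact dist_eq_zero.mp hd
  -- assemble the quadruple
  set Qo : S → O → A → P → ℝ := fun s ω a p =>
    c s a + γ * ∑ s', K p s a s' * (∑ p', w p' * Qβ s' ω p') with hQo
  set QΩ : S → O → P → ℝ := fun s ω p => ∑ a, πo ω s a * Qo s ω a p with hQΩ
  set VΩ : S → P → ℝ := fun s p => ∑ ω, πΩ s ω * QΩ s ω p with hVΩ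
  have hgQβ : g Qβ = QΩ := rfl
  refine ⟨(QΩ, Qo, Qβ, VΩ), ⟨fun s ω p => rfl, fun s ω a p => rfl, ?_, fun s p => rfl⟩, ?_⟩
  · intro s ω p
    have h := congrFun (congrFun (congrFun hfix s) ω) p
    dsimp only
    rw [← h]
  · rintro ⟨FQΩ, FQo, FQβ, FVΩ⟩ ⟨h1, h2, h3, h4⟩
    dsimp only at h1 h2 h3 h4 ⊢
    have hgF : g FQβ = FQΩ := by
      funext s ω p
      rw [h1 s ω p]
      refine Finset.sum_congr rfl fun a _ => ?_
      rw [h2 s ω a p]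
    have hFfix : T FQβ = FQβ := by
      funext s ω p
      rw [hTdef]
      simp only [hgF]
      exact (h3 s ω p).symm
    have hβeq : FQβ = Qβ := huniq FQβ hFfix
    have hQoeq : FQo = Qo := by
      funext s ω a p
      rw [h2 s ω a p, hβeq]
    have hQΩeq : FQΩ = QΩ := by
      funext s ω p
      rw [h1 s ω p, hQoeq]
    have hVΩeq : FVΩ = VΩ := by
      funext s p
      rw [h4 s p, hQΩeq]
    simp [hβeq, hQoeq, hQΩeq, hVΩeq]
end
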